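/- arXiv:2207.03969 — 2 statements merged into one kernel-verified Lean document; each statement's English description precedes it below -/
import Mathlib

section
/- For every pair of infinite regular cardinals λ < κ with λ⁺ < κ and every stationary S ⊆ E^κ_λ, there is a C-sequence ⟨C_δ : δ ∈ S⟩ such that for every club D ⊆ κ, the set {δ ∈ S : C_δ ⊆ D} is stationary in κ. -/
open Set Ordinal

noncomputable section

abbrev O : Type 1 := Ordinal.{0}

/-- `ssup A` is the strict supremum of a set of ordinals. -/
def ssup (A : Set O) : O := sSup ((· + 1) '' A)

/-- `acc⁺(A)`: accumulation points below the strict sup. -/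
def accP (A : Set O) : Set O := {α | α < ssup A ∧ 0 < α ∧ sSup (A ∩ Iio α) = α}

def accOf (A : Set O) : Set O := A ∩ accP A

def nacc (A : Set O) : Set O := A \ accOf A

def clOf (A : Set O) : Set O := A ∪ accP A

/-- order type of a set of ordinals -/
def otp (A : Set O) : Ordinal.{1} := Ordinal.type (Subrel ((· < ·) : O → O → Prop) (· ∈ A))

/-- lift a small ordinal one universe up -/
def olift (a : O) : Ordinal.{1} := Ordinal.lift.{1} a

/-- `suc_σ(A)`: elements of `A` whose index in `A` is `j+1` for some `j < σ`. -/
def sucSet (σ : Ordinal.{1}) (A : Set O) : Set O := {β | β ∈ A ∧ ∃ j < σ, otp (A ∩ Iio β) = j + 1}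

def UnbIn (A : Set O) (δ : O) : Prop := ∀ α < δ, ∃ β ∈ A, α < β ∧ β < δ

def IsClubIn (C : Set O) (δ : O) : Prop :=
  C ⊆ Iio δ ∧ UnbIn C δ ∧ ∀ α < δ, 0 < α → sSup (C ∩ Iio α) = α → α ∈ C

def IsStatIn (S : Set O) (δ : O) : Prop :=
  S ⊆ Iio δ ∧ ∀ D, IsClubIn D δ → (S ∩ D).Nonempty

def Ecof (κ : O) (lam : Cardinal.{0}) : Set O := {δ | δ < κ ∧ δ.cof = lam}

def PhiSup (B x : Set O) : Set O :=
  if sSup (x ∩ B) = sSup x then clOf (x ∩ B) else x \ Iio (sSup (x ∩ B))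

def PhiD (D x : Set O) : Set O :=
  if sSup (D ∩ Iio (sSup x)) = sSup x then
    {γ | ∃ η ∈ x, sInf D < η ∧ γ = sSup (D ∩ Iio η)}
  else x \ Iio (sSup (D ∩ Iio (sSup x)))

/-- `cf(δ)`-additive proper ideal on `δ` extending the bounded ideal. -/
def GoodIdeal (δ : O) (J : Set (Set O)) : Prop :=
  (∀ A B : Set O, A ⊆ B → B ∈ J → A ∈ J) ∧
  (Iio δ ∉ J) ∧
  (∀ B : Set O, B ⊆ Iio δ → sSup B < δ → B ∈ J) ∧
  (∀ ξ < (Ordinal.cof δ).ord, ∀ f : O → Set O, (∀ i < ξ, f i ∈ J) → (⋃ i ∈ Iio ξ, f i) ∈ J)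

/-!
For a set `E` and `δ ∈ S`, fix a cofinal subset `c_δ ⊆ δ` of size `cf δ = λ` (the ladder) and
pull it down into `E`: `drop E δ` is the set of the nonzero `sup (E ∩ γ)`, `γ ∈ c_δ`; its closure
in `δ` is the candidate `C_δ`. If no club `E` works, every club `E` is defeated by a club `B(E)`.
Shrink `E_i = ⋂_{j<i} (E_j ∩ B(E_j) ∩ acc E_j)` for `i ≤ λ⁺` and take `δ ∈ S ∩ E_{λ⁺}`. For each
`γ ∈ c_δ` the ordinals `sup (E_i ∩ γ)` are non-increasing in `i`, hence eventually constant; as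
`|c_δ| = λ < cf λ⁺`, they are all constant from `i` to `i + 1` for some `i < λ⁺`. Then every point
of `drop E_i δ` equals `sup (E_{i+1} ∩ γ) ∈ E_{i+1} ⊆ B(E_i)`, so `B(E_i)` does not defeat `E_i`
at `δ`.
-/

universe u

open Cardinal Order

def accIn (A : Set O) (δ : O) : Set O := {α | α < δ ∧ 0 < α ∧ UnbIn A α}

def closureIn (A : Set O) (δ : O) : Set O := A ∪ accIn A δ

variable {A B C D E : Set O} {α δ κo : O}

theorem sSup_inter_Iio_le : sSup (A ∩ Iio α) ≤ α := csSup_le' fun _ h => h.2.le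

theorem sSup_inter_Iio_eq_iff : sSup (A ∩ Iio α) = α ↔ UnbIn A α := by
  refine ⟨fun h x hx => ?_, fun h => le_antisymm sSup_inter_Iio_le ?_⟩
  · obtain ⟨a, ⟨haA, haα⟩, hxa⟩ := exists_lt_of_lt_csSup' (h.symm ▸ hx)
    exact ⟨a, haA, hxa, haα⟩
  · refine le_of_forall_lt fun x hx => ?_
    obtain ⟨a, haA, hxa, haα⟩ := h x hx
    exact hxa.trans_le (le_csSup ⟨α, fun _ hb => hb.2.le⟩ ⟨haA, haα⟩)

theorem isClubIn_iff : IsClubIn C δ ↔ C ⊆ Iio δ ∧ UnbIn C δ ∧ accIn C δ ⊆ C := by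
  simp only [IsClubIn, accIn, subset_def, mem_ofPred_eq, sSup_inter_Iio_eq_iff, and_imp]

theorem UnbIn.mono (h : UnbIn A α) (hAB : A ⊆ B) : UnbIn B α := fun x hx =>
  let ⟨a, ha, hxa, haα⟩ := h x hx
  ⟨a, hAB ha, hxa, haα⟩

theorem UnbIn.of_subset_closureIn (h : UnbIn B α) (hB : B ⊆ closureIn A δ) : UnbIn A α := by
  intro x hx
  obtain ⟨b, hb, hxb, hbα⟩ := h x hx
  rcases hB hb with hbA | ⟨-, -, hbA⟩
  · exact ⟨b, hbA, hxb, hbα⟩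
  · obtain ⟨a, ha, hxa, hab⟩ := hbA x hxb
    exact ⟨a, ha, hxa, hab.trans hbα⟩

theorem isClubIn_Iio (hδ : IsSuccLimit δ) : IsClubIn (Iio δ) δ :=
  isClubIn_iff.2 ⟨subset_rfl, fun x hx => ⟨x + 1, hδ.add_one_lt hx, lt_add_one x, hδ.add_one_lt hx⟩,
    fun _ h => h.1⟩

theorem isClubIn_closureIn (hA : A ⊆ Iio δ) (hunb : UnbIn A δ) :
    IsClubIn (closureIn A δ) δ :=
  isClubIn_iff.2 ⟨union_subset hA fun _ h => h.1, hunb.mono subset_union_left,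
    fun _ ⟨hα, hα0, h⟩ => Or.inr ⟨hα, hα0, h.of_subset_closureIn subset_rfl⟩⟩

theorem closureIn_subset (hD : IsClubIn D κo) (hAD : A ⊆ D) (hδ : δ ≤ κo) :
    closureIn A δ ⊆ D :=
  union_subset hAD fun _ ⟨hα, hα0, h⟩ =>
    (isClubIn_iff.1 hD).2.2 ⟨hα.trans_le hδ, hα0, h.mono hAD⟩

theorem IsClubIn.sSup_inter_Iio_mem (hE : IsClubIn E κo) {β : O} (hβ : β < κo)
    (h0 : 0 < sSup (E ∩ Iio β)) : sSup (E ∩ Iio β) ∈ E := by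
  by_contra hs
  have hbdd : BddAbove (E ∩ Iio β) := ⟨β, fun _ h => h.2.le⟩
  refine hs ((isClubIn_iff.1 hE).2.2 ⟨sSup_inter_Iio_le.trans_lt hβ, h0, fun x hx => ?_⟩)
  obtain ⟨a, ha, hxa⟩ := exists_lt_of_lt_csSup' hx
  exact ⟨a, ha.1, hxa, (le_csSup hbdd ha).lt_of_ne fun h => hs (h ▸ ha.1)⟩

theorem exists_unbIn_forall {ι : Type} {E : ι → Set O} (hℵ : ℵ₀ < κo.cof) (hι : #ι < κo.cof)
    (hE : ∀ i, UnbIn (E i) κo) (hα : α < κo) : ∃ s, α < s ∧ s < κo ∧ ∀ i, UnbIn (E i) s := by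
  choose! f hfE hlt hfκ using hE
  -- `s` is the closure of `α + 1` under all the `f i`; a point of `E i` lies between any two
  -- consecutive iterates below `s`.
  set s := nfpFamily f (α + 1)
  have hκo : IsSuccLimit κo := one_lt_cof_iff.1 (one_lt_aleph0.trans hℵ)
  have hs : s < κo := nfpFamily_lt_ord hℵ hι hfκ (hκo.add_one_lt hα)
  have hfold : ∀ l, List.foldr f (α + 1) l < κo := fun l => (foldr_le_nfpFamily f _ l).trans_lt hs
  refine ⟨s, (lt_add_one α).trans_le (le_nfpFamily f _), hs, fun i x hx => ?_⟩
  obtain ⟨l, hxl⟩ := lt_nfpFamily_iff.1 hx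
  exact ⟨f i _, hfE i _ (hfold l), hxl.trans (hlt i _ (hfold l)),
    (hlt i _ (hfold (i :: l))).trans_le (foldr_le_nfpFamily f _ (i :: i :: l))⟩

theorem isClubIn_iInter {ι : Type} {E : ι → Set O} (hℵ : ℵ₀ < κo.cof) (hι : #ι < κo.cof)
    (hE : ∀ i, IsClubIn (E i) κo) : IsClubIn (Iio κo ∩ ⋂ i, E i) κo := by
  simp only [isClubIn_iff] at hE ⊢
  have hmem : ∀ β < κo, 0 < β → (∀ i, UnbIn (E i) β) → β ∈ Iio κo ∩ ⋂ i, E i :=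
    fun β hβ hβ0 h => ⟨hβ, mem_iInter.2 fun i => (hE i).2.2 ⟨hβ, hβ0, h i⟩⟩
  refine ⟨inter_subset_left, fun α hα => ?_, fun β ⟨hβ, hβ0, h⟩ =>
    hmem β hβ hβ0 fun i => h.mono (inter_subset_right.trans (iInter_subset _ i))⟩
  obtain ⟨s, hαs, hs, hunb⟩ := exists_unbIn_forall hℵ hι (fun i => (hE i).2.1) hα
  exact ⟨s, hmem s hs (pos_of_gt hαs) hunb, hαs, hs⟩

theorem isClubIn_inter (hℵ : ℵ₀ < κo.cof) (hA : IsClubIn A κo) (hB : IsClubIn B κo) :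
    IsClubIn (A ∩ B) κo := by
  have hBool : #Bool < κo.cof := by simpa using (natCast_lt_aleph0 (n := 2)).trans hℵ
  have := isClubIn_iInter hℵ hBool (E := fun b => cond b A B) (fun b => by cases b <;> assumption)
  rwa [← inter_eq_iInter, inter_eq_right.2 (inter_subset_left.trans hA.1)] at this

theorem isClubIn_biInter_Iio {μ : O} {E : O → Set O} (hℵ : ℵ₀ < κo.cof) (hμ : μ.card < κo.cof)
    (hE : ∀ j < μ, IsClubIn (E j) κo) : IsClubIn (Iio κo ∩ ⋂ j ∈ Iio μ, E j) κo := by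
  -- reindexed by `μ.ToType`, since `Iio μ` lives in `Type 1`
  have h := isClubIn_iInter hℵ (by rwa [mk_toType]) (E := fun x : μ.ToType => E x.toOrd.1)
    fun x => hE _ x.toOrd.2
  convert h using 2
  ext x
  simp only [mem_iInter]
  exact ⟨fun hx y => hx _ y.toOrd.2, fun hx j hj => by simpa using hx (ToType.mk ⟨j, hj⟩)⟩

theorem isClubIn_accIn (hℵ : ℵ₀ < κo.cof) (hE : IsClubIn E κo) : IsClubIn (accIn E κo) κo := by
  have hUnit : #Unit < κo.cof := by simpa using one_lt_aleph0.trans hℵ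
  refine isClubIn_iff.2 ⟨fun _ h => h.1, fun α hα => ?_,
    fun β ⟨hβ, hβ0, h⟩ => ⟨hβ, hβ0, h.of_subset_closureIn subset_union_right⟩⟩
  obtain ⟨s, hαs, hs, hunb⟩ := exists_unbIn_forall hℵ hUnit (fun _ => (isClubIn_iff.1 hE).2.1) hα
  exact ⟨s, ⟨hs, pos_of_gt hαs, hunb ()⟩, hαs, hs⟩

theorem exists_succ_eq_of_antitone {ι : Type u} {θ : O} (hθ : IsSuccLimit θ)
    (hι : Cardinal.lift.{0} #ι < (Ordinal.lift.{u} θ).cof) {m : O → ι → O}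
    (hm : ∀ x, Antitone (m · x)) : ∃ i < θ, ∀ x, m (succ i) x = m i x := by
  have hmin : ∀ x, ∃ i < θ, ∀ j < θ, m i x ≤ m j x := fun x => by
    obtain ⟨_, ⟨i, hi, rfl⟩, hmin⟩ :=
      wellFounded_lt.has_min ((m · x) '' Iio θ) ⟨_, 0, hθ.bot_lt, rfl⟩
    exact ⟨i, hi, fun j hj => not_lt.1 (hmin _ ⟨j, hj, rfl⟩)⟩
  choose I hIθ hI using hmin
  have hsup : ⨆ x, I x < θ := lift_iSup_lt_of_lt_cof hι hIθ
  refine ⟨⨆ x, I x, hsup, fun x => le_antisymm (hm x (le_succ _)) ?_⟩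
  calc m (⨆ x, I x) x ≤ m (I x) x := hm x (le_ciSup ⟨θ, by rintro _ ⟨y, rfl⟩; exact (hIθ y).le⟩ x)
    _ ≤ m (succ (⨆ x, I x)) x := hI x _ (hθ.succ_lt hsup)

theorem exists_cofinal_subset (δ : O) :
    ∃ c : Set O, c ⊆ Iio δ ∧ (∀ α < δ, ∃ γ ∈ c, α ≤ γ) ∧ #c ≤ Cardinal.lift.{1} δ.cof := by
  obtain ⟨s, hs, hcard⟩ := Order.exists_cof_eq (Iio δ)
  refine ⟨Subtype.val '' s, image_subset_iff.2 fun x _ => x.2, fun α hα => ?_, ?_⟩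
  · obtain ⟨γ, hγ, hαγ⟩ := hs ⟨α, hα⟩
    exact ⟨γ, mem_image_of_mem _ hγ, hαγ⟩
  · rw [lift_cof, ← cof_Iio, ← hcard]
    exact mk_image_le

def ladder (δ : O) : Set O := (exists_cofinal_subset δ).choose

theorem ladder_subset_Iio : ladder δ ⊆ Iio δ := (exists_cofinal_subset δ).choose_spec.1

theorem exists_le_mem_ladder (hα : α < δ) : ∃ γ ∈ ladder δ, α ≤ γ :=
  (exists_cofinal_subset δ).choose_spec.2.1 α hα

theorem mk_ladder_le : #(ladder δ) ≤ Cardinal.lift.{1} δ.cof :=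
  (exists_cofinal_subset δ).choose_spec.2.2

def drop (E : Set O) (δ : O) : Set O := {x | 0 < x ∧ ∃ γ ∈ ladder δ, x = sSup (E ∩ Iio γ)}

theorem drop_subset_Iio : drop E δ ⊆ Iio δ := by
  rintro _ ⟨-, γ, hγ, rfl⟩
  exact sSup_inter_Iio_le.trans_lt (ladder_subset_Iio hγ)

theorem unbIn_drop (hδ : IsSuccLimit δ) (hE : UnbIn E δ) : UnbIn (drop E δ) δ := by
  intro α hα
  obtain ⟨e, he, hαe, heδ⟩ := hE α hα
  obtain ⟨γ, hγ, heγ⟩ := exists_le_mem_ladder (hδ.add_one_lt heδ)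
  have hx : α < sSup (E ∩ Iio γ) :=
    hαe.trans_le (le_csSup ⟨γ, fun _ h => h.2.le⟩ ⟨he, (lt_add_one e).trans_le heγ⟩)
  have hmem : sSup (E ∩ Iio γ) ∈ drop E δ := ⟨pos_of_gt hx, γ, hγ, rfl⟩
  exact ⟨_, hmem, hx, drop_subset_Iio hmem⟩

/-- Intersecting over all earlier stages makes the sequence decreasing, and continuous at limits,
with no case split on successor and limit stages. -/
def shrinkSeq (next : Set O → Set O) (κo : O) (i : O) : Set O :=
  Iio κo ∩ ⋂ j ∈ Iio i, next (shrinkSeq next κo j)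
termination_by i

section shrinkSeq

variable {next : Set O → Set O} {i j : O}

theorem shrinkSeq_subset (hji : j < i) : shrinkSeq next κo i ⊆ next (shrinkSeq next κo j) := by
  rw [shrinkSeq]
  exact inter_subset_right.trans (biInter_subset_of_mem hji)

theorem shrinkSeq_antitone (hnext : ∀ E, next E ⊆ E) : Antitone (shrinkSeq next κo) := by
  intro j i hji
  rcases hji.lt_or_eq with hji | rfl
  · exact (shrinkSeq_subset hji).trans (hnext _)
  · exact subset_rfl

theorem isClubIn_shrinkSeq (hℵ : ℵ₀ < κo.cof) (hnext : ∀ E, IsClubIn E κo → IsClubIn (next E) κo)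
    (hi : i.card < κo.cof) : IsClubIn (shrinkSeq next κo i) κo := by
  induction i using WellFoundedLT.induction with
  | _ i ih =>
    rw [shrinkSeq]
    exact isClubIn_biInter_Iio hℵ hi fun j hj =>
      hnext _ (ih j hj ((card_le_card hj.le).trans_lt hi))

end shrinkSeq

def GuessesClubs (S : Set O) (κo : O) (E : Set O) : Prop :=
  ∀ D, IsClubIn D κo → IsStatIn {δ ∈ S | UnbIn E δ ∧ drop E δ ⊆ D} κo

variable {S : Set O} {lam : Cardinal.{0}}

theorem exists_club_of_not_guessesClubs (hℵ : ℵ₀ < κo.cof) (hS : S ⊆ Iio κo)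
    (h : ¬ GuessesClubs S κo E) :
    ∃ B, IsClubIn B κo ∧ ∀ δ ∈ S, δ ∈ B → UnbIn E δ → ¬ drop E δ ⊆ B := by
  obtain ⟨D, hD, hT⟩ : ∃ D, IsClubIn D κo ∧ ¬ IsStatIn {δ ∈ S | UnbIn E δ ∧ drop E δ ⊆ D} κo := by
    simpa [GuessesClubs] using h
  obtain ⟨D', hD', hempty⟩ : ∃ D', IsClubIn D' κo ∧
      ¬ ({δ ∈ S | UnbIn E δ ∧ drop E δ ⊆ D} ∩ D').Nonempty := by
    by_contra! h'
    exact hT ⟨fun δ hδ => hS hδ.1, h'⟩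
  exact ⟨D ∩ D', isClubIn_inter hℵ hD hD', fun δ hδS hδB hδE hdrop =>
    hempty ⟨δ, ⟨hδS, hδE, hdrop.trans inter_subset_left⟩, hδB.2⟩⟩

theorem exists_drop_subset (hlam : ℵ₀ ≤ lam) (hκ : succ lam < κo.cof)
    (hSsub : S ⊆ Ecof κo lam) (hS : IsStatIn S κo) (B : Set O → Set O)
    (hB : ∀ E, IsClubIn E κo → IsClubIn (B E) κo) :
    ∃ E, IsClubIn E κo ∧ ∃ δ ∈ S, δ ∈ B E ∧ UnbIn E δ ∧ drop E δ ⊆ B E := by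
  have hℵ : ℵ₀ < κo.cof := hlam.trans_lt ((lt_succ lam).trans hκ)
  set θ := (succ lam).ord
  set E := shrinkSeq (fun E => E ∩ B E ∩ accIn E κo) κo
  have hclub : ∀ i ≤ θ, IsClubIn (E i) κo := fun i hi =>
    isClubIn_shrinkSeq hℵ
      (fun E hE => isClubIn_inter hℵ (isClubIn_inter hℵ hE (hB E hE)) (isClubIn_accIn hℵ hE))
      ((card_le_card hi).trans_lt (by rwa [card_ord]))
  obtain ⟨δ, hδS, hδE⟩ := hS.2 _ (hclub θ le_rfl)
  have hθ : IsSuccLimit θ := isSuccLimit_ord (hlam.trans (le_succ lam))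
  have hladder : Cardinal.lift.{0} #(ladder δ) < (Ordinal.lift.{1} θ).cof := by
    rw [Cardinal.lift_uzero, ← lift_cof, (isRegular_succ hlam).cof_ord]
    exact mk_ladder_le.trans_lt (by rw [(hSsub hδS).2]; exact Cardinal.lift_lt.2 (lt_succ lam))
  have hanti : Antitone E := shrinkSeq_antitone fun _ => inter_subset_left.trans inter_subset_left
  obtain ⟨i, hi, hstable⟩ := exists_succ_eq_of_antitone hθ hladder
    (m := fun i (γ : ladder δ) => sSup (E i ∩ Iio γ))
    fun γ j k hjk => csSup_le_csSup' ⟨γ, fun _ h => h.2.le⟩ (inter_subset_inter_left _ (hanti hjk))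
  have hδi : δ ∈ E i ∩ B (E i) ∩ accIn (E i) κo := shrinkSeq_subset hi hδE
  refine ⟨E i, hclub i hi.le, δ, hδS, hδi.1.2, hδi.2.2.2, ?_⟩
  rintro _ ⟨hx0, γ, hγ, rfl⟩
  have hγκ : γ < κo := (ladder_subset_Iio hγ).trans (hSsub hδS).1
  rw [← hstable ⟨γ, hγ⟩] at hx0 ⊢
  exact (shrinkSeq_subset (lt_succ i)
    ((hclub _ (succ_le_of_lt hi)).sSup_inter_Iio_mem hγκ hx0)).1.2

theorem exists_guessesClubs (hlam : ℵ₀ ≤ lam) (hκ : succ lam < κo.cof)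
    (hSsub : S ⊆ Ecof κo lam) (hS : IsStatIn S κo) : ∃ E, GuessesClubs S κo E := by
  by_contra! hfail
  choose! B hBclub hB using fun E (_ : IsClubIn E κo) =>
    exists_club_of_not_guessesClubs (hlam.trans_lt ((lt_succ lam).trans hκ))
      (fun δ hδ => (hSsub hδ).1) (hfail E)
  obtain ⟨E, hE, δ, hδS, hδB, hδE, hdrop⟩ := exists_drop_subset hlam hκ hSsub hS B hBclub
  exact hB E hE δ hδS hδB hδE hdrop

theorem statement6_general (lam κ : Cardinal.{0}) (hlam : lam.IsRegular) (hκ : κ.IsRegular)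
    (hsucc : Order.succ lam < κ)
    (S : Set O) (hSsub : S ⊆ Ecof κ.ord lam) (hS : IsStatIn S κ.ord) :
    ∃ C : O → Set O, (∀ δ ∈ S, IsClubIn (C δ) δ) ∧
      ∀ D, IsClubIn D κ.ord → IsStatIn {δ ∈ S | C δ ⊆ D} κ.ord := by
  classical
  obtain ⟨E, hE⟩ := exists_guessesClubs hlam.aleph0_le (by rwa [hκ.cof_ord]) hSsub hS
  refine ⟨fun δ => if UnbIn E δ then closureIn (drop E δ) δ else Iio δ, fun δ hδS => ?_,
    fun D hD => ⟨fun δ hδ => (hSsub hδ.1).1, fun D' hD' => ?_⟩⟩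
  · have hδ : IsSuccLimit δ :=
      one_lt_cof_iff.1 ((hSsub hδS).2 ▸ one_lt_aleph0.trans_le hlam.aleph0_le)
    dsimp only
    split_ifs with hδE
    · exact isClubIn_closureIn drop_subset_Iio (unbIn_drop hδ hδE)
    · exact isClubIn_Iio hδ
  · obtain ⟨δ, ⟨hδS, hδE, hdrop⟩, hδD'⟩ := (hE D hD).2 D' hD'
    refine ⟨δ, ⟨hδS, ?_⟩, hδD'⟩
    simpa [hδE] using closureIn_subset hD hdrop (hSsub hδS).1.le

/-- Shelah's club-guessing theorem: for infinite regular `λ < κ` with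
`λ⁺ < κ` and stationary `S ⊆ E^κ_λ`, there is a C-sequence with `{δ ∈ S | C_δ ⊆ D}`
stationary for every club `D`. -/
theorem statement6 (lam κ : Cardinal.{0}) (hlam : lam.IsRegular) (hκ : κ.IsRegular)
    (hlt : lam < κ) (hsucc : Order.succ lam < κ)
    (S : Set O) (hSsub : S ⊆ Ecof κ.ord lam) (hS : IsStatIn S κ.ord) :
    ∃ C : O → Set O, (∀ δ ∈ S, IsClubIn (C δ) δ) ∧
      ∀ D, IsClubIn D κ.ord → IsStatIn {δ ∈ S | C δ ⊆ D} κ.ord :=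
  statement6_general lam κ hlam hκ hsucc S hSsub hS
end
end

section
/- Suppose S ⊆ κ is stationary and ⟨C_δ : δ ∈ S⟩ is an amenable C-sequence, meaning that for every club D ⊆ κ the set {δ ∈ S : sup((D ∩ δ) \ C_δ) < δ} is nonstationary in κ. If κ ≥ ℵ₂, then there exists a club D ⊆ κ such that for every club E ⊆ κ there exists δ ∈ S with sup(nacc(Φ_D(C_δ)) ∩ E) = δ. -/
open Set Ordinal

noncomputable section

/-!
Suppose the theorem fails, so each club `D` has a club `e D` with
`sup (nacc (Φ_D(C_δ)) ∩ e D) ≠ δ` for all `δ ∈ S`. Let `D i = ⋂_{j<i} e (D j)` and use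
amenability of `D (ω₁ + ω)` to find `δ ∈ S` for which `A = (D (ω₁ + ω) ∩ δ) \ C_δ` is unbounded
in `δ`. For `β ∈ A` and `η` the least element of `C_δ` above `β`, the ordinal `sup (D i ∩ η)` is a
non-accumulation point of `Φ_{D i}(C_δ)` lying above `β`. It is non-increasing in `i`, hence
eventually constant below `ω₁` and below `ω₁ + ω`, and at every stage where it does not drop it
lies in `D (i + 1) ⊆ e (D i)`. Either cofinally many `β` stabilise by one stage `ω₁ + n`, or a
cofinal `ω`-sequence of them stabilises below a common countable stage; in both cases that stage
`i` has `sup (nacc (Φ_{D i}(C_δ)) ∩ e (D i)) = δ`.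
-/

lemma sSup_inter_Iio_le_s7 {α : Type*} [ConditionallyCompleteLinearOrderBot α] (s : Set α) (a : α) :
    sSup (s ∩ Iio a) ≤ a :=
  csSup_le' fun _ h => h.2.le

section ClubIn

variable {C : Set O} {δ : O}

lemma IsClubIn.sSup_eq (hC : IsClubIn C δ) : sSup C = δ := by
  refine le_antisymm (csSup_le' fun x hx => (hC.1 hx).le) (le_of_forall_lt fun x hx => ?_)
  obtain ⟨y, hyC, hxy, -⟩ := hC.2.1 x hx
  exact lt_csSup_of_lt ⟨δ, fun z hz => (hC.1 hz).le⟩ hyC hxy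

lemma IsClubIn.exists_isLeast (hC : IsClubIn C δ) {β : O} (hβ : β < δ) :
    ∃ η, IsLeast {y | y ∈ C ∧ β < y} η := by
  obtain ⟨y, hyC, hβy, -⟩ := hC.2.1 β hβ
  exact ⟨_, isLeast_csInf ⟨y, hyC, hβy⟩⟩

lemma IsClubIn.sSup_inter_Iio_mem_s7 (hC : IsClubIn C δ) {η : O} (hη : η < δ)
    (hne : (C ∩ Iio η).Nonempty) : sSup (C ∩ Iio η) ∈ C := by
  set γ := sSup (C ∩ Iio η)
  by_cases hγ : γ ∈ C ∩ Iio η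
  · exact hγ.1
  have hlt : ∀ x ∈ C ∩ Iio η, x < γ := fun x hx =>
    (le_csSup ⟨η, fun _ hz => hz.2.le⟩ hx).lt_of_ne (by rintro rfl; exact hγ hx)
  have hγη : γ ≤ η := sSup_inter_Iio_le_s7 C η
  have hCγ : C ∩ Iio γ = C ∩ Iio η :=
    Subset.antisymm (inter_subset_inter_right _ (Iio_subset_Iio hγη)) fun x hx => ⟨hx.1, hlt x hx⟩
  obtain ⟨x, hx⟩ := hne
  exact hC.2.2 γ (hγη.trans_lt hη) (bot_le.trans_lt (hlt x hx)) (by rw [hCγ])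

end ClubIn

lemma unbIn_iff_isCofinal {C : Set O} {κo : O} (hκo : Order.IsSuccLimit κo) :
    UnbIn C κo ↔ IsCofinal ((↑) ⁻¹' C : Set (Iio κo)) := by
  constructor
  · rintro h ⟨x, hx⟩
    obtain ⟨β, hβC, hxβ, hβκ⟩ := h x hx
    exact ⟨⟨β, hβκ⟩, hβC, hxβ.le⟩
  · intro h α hα
    obtain ⟨⟨β, hβκ⟩, hβC, hαβ⟩ := h ⟨α + 1, hκo.succ_lt hα⟩
    exact ⟨β, hβC, (lt_add_one α).trans_le hαβ, hβκ⟩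

lemma isClubIn_iff_isClub {C : Set O} {κo : O} (hκo : Order.IsSuccLimit κo) :
    IsClubIn C κo ↔ C ⊆ Iio κo ∧ IsClub ((↑) ⁻¹' C : Set (Iio κo)) := by
  simp only [IsClubIn, isClub_iff, unbIn_iff_isCofinal hκo, dirSupClosed_iff_of_linearOrder]
  refine and_congr_right fun _ => ⟨fun ⟨hcof, hclosed⟩ => ⟨?_, hcof⟩,
    fun ⟨hclosed, hcof⟩ => ⟨hcof, ?_⟩⟩
  · rintro d hdC ⟨x, hx⟩ a ha
    by_cases had : a ∈ d
    · exact hdC had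
    have hlt : ∀ y ∈ d, y < a := fun y hy => (ha.1 hy).lt_of_ne (by rintro rfl; exact had hy)
    refine hclosed a a.2 (bot_le.trans_lt (hlt x hx))
      (le_antisymm (sSup_inter_Iio_le_s7 _ _) (le_of_forall_lt fun z hz => ?_))
    obtain ⟨y, hyd, hzy⟩ : ∃ y ∈ d, z < y.1 := by
      by_contra! h
      exact hz.not_ge (ha.2 (show (⟨z, hz.trans a.2⟩ : Iio κo) ∈ upperBounds d from h))
    exact lt_csSup_of_lt ⟨a, fun _ hw => hw.2.le⟩ ⟨hdC hyd, hlt y hyd⟩ hzy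
  · intro α hακ hα0 hsup
    have hne : (C ∩ Iio α).Nonempty := by
      by_contra! h
      rw [h, csSup_empty] at hsup
      exact hα0.ne hsup
    refine hclosed (d := (↑) ⁻¹' (C ∩ Iio α)) (fun y hy => hy.1) ?_ (a := ⟨α, hακ⟩) ?_
    · obtain ⟨y, hyC, hyα⟩ := hne
      exact ⟨⟨y, hyα.trans hακ⟩, hyC, hyα⟩
    · refine ⟨fun y hy => hy.2.le, fun b hb => ?_⟩
      show α ≤ b.1
      exact hsup ▸ csSup_le' fun y hy => hb (a := ⟨y, hy.2.trans hακ⟩) hy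

lemma isClubIn_iInter_s7 {κ : Cardinal.{0}} (hκ : κ.IsRegular) (hω : Cardinal.aleph0 < κ)
    {i : O} (hi : i < κ.ord) {T : O → Set O} (hT : ∀ j < i, IsClubIn (T j) κ.ord) :
    IsClubIn (Iio κ.ord ∩ ⋂ j : Iio i, T j) κ.ord := by
  have hlim := Cardinal.isSuccLimit_ord hκ.aleph0_le
  have hcof : Order.cof (Iio κ.ord) = Cardinal.lift.{1} κ := by
    rw [cof_Iio, ← lift_cof, hκ.cof_ord]
  rw [isClubIn_iff_isClub hlim]
  refine ⟨inter_subset_left, ?_⟩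
  have hpre : ((↑) ⁻¹' (Iio κ.ord ∩ ⋂ j : Iio i, T j) : Set (Iio κ.ord)) =
      ⋂ j : Iio i, (↑) ⁻¹' T j := by
    ext x
    simp
  rw [hpre]
  refine IsClub.iInter ?_ ?_ fun j => ((isClubIn_iff_isClub hlim).1 (hT j j.2)).2
  · rw [hcof]
    simpa using hω.ne'
  · simpa [hcof, Cardinal.mk_Iio_ordinal, Cardinal.lt_ord, ← Ordinal.lift_card] using hi

def clubChain (κo : O) (e : Set O → Set O) (i : O) : Set O :=
  Iio κo ∩ ⋂ j : Iio i, e (clubChain κo e j)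
termination_by i
decreasing_by exact j.2

section ClubChain

variable {κo : O} {e : Set O → Set O}

lemma clubChain_subset {i j : O} (hji : j < i) : clubChain κo e i ⊆ e (clubChain κo e j) := by
  rw [clubChain]
  exact inter_subset_right.trans (iInter_subset_of_subset ⟨j, hji⟩ subset_rfl)

lemma clubChain_antitone : Antitone (clubChain κo e) := by
  intro i i' hii' x hx
  rw [clubChain] at hx ⊢
  exact ⟨hx.1, mem_iInter.2 fun j => mem_iInter.1 hx.2 ⟨j, j.2.trans_le hii'⟩⟩

lemma isClubIn_clubChain {κ : Cardinal.{0}} (hκ : κ.IsRegular) (hω : Cardinal.aleph0 < κ)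
    (he : ∀ D, IsClubIn D κ.ord → IsClubIn (e D) κ.ord) {i : O} (hi : i < κ.ord) :
    IsClubIn (clubChain κ.ord e i) κ.ord := by
  induction i using WellFoundedLT.induction with
  | _ i IH =>
    rw [clubChain]
    exact isClubIn_iInter_s7 hκ hω hi fun j hj => he _ (IH j hj (hj.trans hi))

end ClubChain

section PhiD

variable {C D : Set O} {δ : O}

lemma PhiD_subset_Iio (hC : C ⊆ Iio δ) : PhiD D C ⊆ Iio δ := by
  unfold PhiD
  split_ifs
  · rintro _ ⟨η, hηC, -, rfl⟩
    exact (sSup_inter_Iio_le_s7 D η).trans_lt (hC hηC)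
  · exact sdiff_subset.trans hC

lemma PhiD_eq_of_sSup_eq (hC : IsClubIn C δ) (hD : sSup (D ∩ Iio δ) = δ) :
    PhiD D C = {γ | ∃ η ∈ C, sInf D < η ∧ γ = sSup (D ∩ Iio η)} := by
  rw [PhiD, hC.sSup_eq, if_pos hD]

lemma sSup_inter_Iio_mem_nacc_PhiD (hC : IsClubIn C δ) (hD : sSup (D ∩ Iio δ) = δ)
    {β η : O} (hβD : β ∈ D) (hβC : β ∉ C) (hη : IsLeast {y | y ∈ C ∧ β < y} η) :
    sSup (D ∩ Iio η) ∈ nacc (PhiD D C) := by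
  have hPhi := PhiD_eq_of_sSup_eq hC hD
  set γ := sSup (D ∩ Iio η)
  have hβγ : β ≤ γ := le_csSup ⟨η, fun _ h => h.2.le⟩ ⟨hβD, hη.1.2⟩
  refine ⟨hPhi ▸ ⟨η, hη.1.1, (csInf_le' hβD).trans_lt hη.1.2, rfl⟩, ?_⟩
  rintro ⟨-, -, hγ0, hγsup⟩
  -- Elements `sSup (D ∩ Iio η')` of `Φ_D(C)` below `γ` have `η' < η`, hence `η' < β`: so if `γ`
  -- were an accumulation point of `Φ_D(C)`, then `β` would be one of `C`.
  have hbound : sSup (PhiD D C ∩ Iio γ) ≤ sSup (C ∩ Iio β) := by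
    refine csSup_le' fun x ⟨hxΦ, hxγ⟩ => ?_
    rw [hPhi] at hxΦ
    obtain ⟨η', hη'C, -, rfl⟩ := hxΦ
    have hη'η : η' < η := lt_of_not_ge fun h => hxγ.not_ge <|
      csSup_le_csSup' ⟨η', fun _ hz => hz.2.le⟩ (inter_subset_inter_right _ (Iio_subset_Iio h))
    have hη'β : η' < β := lt_of_not_ge fun h => hη'η.not_ge <|
      hη.2 ⟨hη'C, h.lt_of_ne fun e => hβC (e ▸ hη'C)⟩
    exact (sSup_inter_Iio_le_s7 D η').trans (le_csSup ⟨β, fun _ hz => hz.2.le⟩ ⟨hη'C, hη'β⟩)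
  have hCβ : sSup (C ∩ Iio β) ≤ β := sSup_inter_Iio_le_s7 C β
  have hγβ : γ ≤ β := hγsup ▸ hbound.trans hCβ
  exact hβC (hC.2.2 β (hη.1.2.trans (hC.1 hη.1.1)) (hγ0.trans_le hγβ)
    (le_antisymm hCβ (hβγ.trans (hγsup ▸ hbound))))

end PhiD

lemma exists_forall_ge_eq_of_antitone {ι α : Type*} [Preorder ι] [Nonempty ι] [LinearOrder α]
    [WellFoundedLT α] {f : ι → α} (hf : Antitone f) : ∃ i₀, ∀ i, i₀ ≤ i → f i = f i₀ :=
  ⟨Function.argmin f, fun i hi => (hf hi).antisymm (Function.argmin_le f i)⟩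

section Stabilization

variable {β : O} {g : O → O} {ε : O → O}

lemma exists_lt_omega_one_forall_le (hg : AntitoneOn g (Iio (ω₁ + ω)))
    (hstep : ∀ i, i + 1 < ω₁ + ω → g (i + 1) = g i → β ≤ ε i) :
    ∃ i₀ < ω₁, ∀ i, i₀ ≤ i → i < ω₁ → β ≤ ε i := by
  have hω₁ : ω₁ ≤ ω₁ + ω := le_self_add
  have : Nonempty (Iio (ω₁ : O)) := ⟨⟨0, (Cardinal.isSuccLimit_omega 1).bot_lt⟩⟩
  obtain ⟨⟨i₀, hi₀⟩, hconst⟩ := exists_forall_ge_eq_of_antitone (ι := Iio (ω₁ : O))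
    (f := fun i => g i) fun i j hij => hg (i.2.trans_le hω₁) (j.2.trans_le hω₁) hij
  refine ⟨i₀, hi₀, fun i hi hiω => ?_⟩
  have hsucc : i + 1 < ω₁ := (Cardinal.isSuccLimit_omega 1).succ_lt hiω
  refine hstep i (hsucc.trans_le hω₁) ?_
  exact (hconst ⟨i + 1, hsucc⟩ (hi.trans le_self_add)).trans (hconst ⟨i, hiω⟩ hi).symm

lemma exists_nat_forall_le_omega_one_add (hg : AntitoneOn g (Iio (ω₁ + ω)))
    (hstep : ∀ i, i + 1 < ω₁ + ω → g (i + 1) = g i → β ≤ ε i) :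
    ∃ n₀ : ℕ, ∀ n : ℕ, n₀ ≤ n → β ≤ ε (ω₁ + n) := by
  have hlt : ∀ n : ℕ, ω₁ + n < ω₁ + ω := fun n => add_lt_add_right (natCast_lt_omega0 n) _
  have hsucc : ∀ n : ℕ, ω₁ + n + 1 = ω₁ + ((n + 1 : ℕ) : O) := fun n => by
    push_cast; rw [add_assoc]
  obtain ⟨n₀, hconst⟩ := exists_forall_ge_eq_of_antitone (f := fun n : ℕ => g (ω₁ + n))
    fun m n hmn => hg (hlt m) (hlt n) (add_le_add_right (Nat.cast_le.2 hmn) _)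
  refine ⟨n₀, fun n hn => hstep _ (hsucc n ▸ hlt (n + 1)) ?_⟩
  rw [hsucc]
  exact (hconst (n + 1) (hn.trans n.le_succ)).trans (hconst n hn).symm

end Stabilization

lemma exists_lt_sSup_le_of_antitoneOn {A : Set O} {g : O → O → O} {ε : O → O}
    (hg : ∀ β ∈ A, AntitoneOn (g β) (Iio (ω₁ + ω)))
    (hstep : ∀ β ∈ A, ∀ i, i + 1 < ω₁ + ω → g β (i + 1) = g β i → β ≤ ε i) :
    ∃ i < ω₁ + ω, sSup A ≤ ε i := by
  choose! i₀ hi₀ hi₀ε using fun β hβ => exists_lt_omega_one_forall_le (hg β hβ) (hstep β hβ)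
  choose! n₀ hn₀ using fun β hβ => exists_nat_forall_le_omega_one_add (hg β hβ) (hstep β hβ)
  by_cases hcase : ∃ n : ℕ, ∀ β ∈ A, ∃ β' ∈ A, β ≤ β' ∧ n₀ β' ≤ n
  · obtain ⟨n, hn⟩ := hcase
    refine ⟨ω₁ + n, add_lt_add_right (natCast_lt_omega0 n) _, csSup_le' fun β hβ => ?_⟩
    obtain ⟨β', hβ', hββ', hn'⟩ := hn β hβ
    exact hββ'.trans (hn₀ β' hβ' n hn')
  · -- Then `A` has a cofinal sequence `βs`, and one countable index below `ω₁` serves all of it.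
    push Not at hcase
    choose βs hβsA hβs using hcase
    have hi : ⨆ n, i₀ (βs n) < ω₁ := Ordinal.iSup_lt_omega_one fun n => hi₀ _ (hβsA n)
    refine ⟨_, hi.trans_le le_self_add, csSup_le' fun β hβ => ?_⟩
    have hββs : β < βs (n₀ β) := lt_of_not_ge fun h => (hβs (n₀ β) β hβ h).false
    exact hββs.le.trans
      (hi₀ε _ (hβsA _) _ (le_ciSup bddAbove_of_small (n₀ β)) hi)

theorem exists_lt_sSup_nacc_PhiD_inter_eq {δ : O} {C : Set O} (hC : IsClubIn C δ)
    {D E : O → Set O} (hanti : Antitone D) (hE : ∀ i, D (i + 1) ⊆ E i)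
    (hclosed : ∀ i < ω₁ + ω, ∀ η < δ, (D i ∩ Iio η).Nonempty → sSup (D i ∩ Iio η) ∈ D i)
    (hA : sSup ((D (ω₁ + ω) ∩ Iio δ) \ C) = δ) :
    ∃ i < ω₁ + ω, sSup (nacc (PhiD (D i) C) ∩ E i) = δ := by
  set A := (D (ω₁ + ω) ∩ Iio δ) \ C
  set ε := fun i => sSup (nacc (PhiD (D i) C) ∩ E i)
  have hεδ : ∀ i, ε i ≤ δ := fun i => csSup_le' fun x hx => (PhiD_subset_Iio hC.1 hx.1.1).le
  have hDδ : ∀ i ≤ ω₁ + ω, sSup (D i ∩ Iio δ) = δ := fun i hi =>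
    le_antisymm (sSup_inter_Iio_le_s7 _ _) <| hA.ge.trans <|
      csSup_le_csSup' (bddAbove_Iio.mono inter_subset_right)
        (sdiff_subset.trans (inter_subset_inter_left _ (hanti hi)))
  choose! η hη using fun β (hβ : β ∈ A) => hC.exists_isLeast hβ.1.2
  set g := fun β i => sSup (D i ∩ Iio (η β))
  have hg : ∀ β ∈ A, AntitoneOn (g β) (Iio (ω₁ + ω)) := fun β _ i _ j _ hij =>
    csSup_le_csSup' (bddAbove_Iio.mono inter_subset_right) (inter_subset_inter_left _ (hanti hij))
  -- Where `g β` does not drop, its value lies in `D (i + 1) ⊆ E i`.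
  have hstep : ∀ β ∈ A, ∀ i, i + 1 < ω₁ + ω → g β (i + 1) = g β i → β ≤ ε i := by
    intro β hβ i hi hstab
    have hβD : β ∈ D (i + 1) := hanti hi.le hβ.1.1
    have hβDi : β ∈ D i := hanti (Order.le_succ i) hβD
    have hgE : g β i ∈ E i := hE i <|
      hstab ▸ hclosed (i + 1) hi (η β) (hC.1 (hη β hβ).1.1) ⟨β, hβD, (hη β hβ).1.2⟩
    have hgΦ : g β i ∈ nacc (PhiD (D i) C) :=
      sSup_inter_Iio_mem_nacc_PhiD hC (hDδ i ((Order.le_succ i).trans hi.le)) hβDi hβ.2 (hη β hβ)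
    calc β ≤ g β i := le_csSup (bddAbove_Iio.mono inter_subset_right) ⟨hβDi, (hη β hβ).1.2⟩
      _ ≤ ε i := le_csSup ⟨δ, fun x hx => (PhiD_subset_Iio hC.1 hx.1.1).le⟩ ⟨hgΦ, hgE⟩
  obtain ⟨i, hi, hle⟩ := exists_lt_sSup_le_of_antitoneOn hg hstep
  exact ⟨i, hi, le_antisymm (hεδ i) (hA ▸ hle)⟩

lemma exists_isClubIn_disjoint_of_not_isStatIn {X : Set O} {δ : O} (hX : X ⊆ Iio δ)
    (h : ¬ IsStatIn X δ) : ∃ B, IsClubIn B δ ∧ Disjoint X B := by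
  simpa [IsStatIn, hX, not_nonempty_iff_eq_empty, disjoint_iff_inter_eq_empty] using h

/-- an amenable C-sequence over `S` can be improved by `Φ_D`
to a club-guessing sequence, for `κ ≥ ℵ₂`. -/
theorem statement7 (κ : Cardinal.{0}) (hκ : κ.IsRegular) (hκ2 : Cardinal.aleph 2 ≤ κ)
    (S : Set O) (hS : IsStatIn S κ.ord)
    (C : O → Set O) (hC : ∀ δ ∈ S, IsClubIn (C δ) δ)
    (hamen : ∀ D, IsClubIn D κ.ord →
      ¬ IsStatIn {δ ∈ S | sSup ((D ∩ Iio δ) \ C δ) < δ} κ.ord) :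
    ∃ D, IsClubIn D κ.ord ∧
      ∀ E, IsClubIn E κ.ord → ∃ δ ∈ S, sSup (nacc (PhiD D (C δ)) ∩ E) = δ := by
  by_contra! hcon
  choose! e he hne using hcon
  have hω₁ : (ω₁ : O) < κ.ord := by
    rw [← Cardinal.ord_aleph, Cardinal.ord_lt_ord]
    exact (Cardinal.aleph_lt_aleph.2 one_lt_two).trans_le hκ2
  have hω : Cardinal.aleph0 < κ := by
    simpa using (Cardinal.lt_ord.1 (omega0_lt_omega_one.trans hω₁))
  have hΛ : ω₁ + ω < κ.ord :=
    Ordinal.isPrincipal_add_ord hκ.aleph0_le hω₁ (omega0_lt_omega_one.trans hω₁)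
  set D := clubChain κ.ord e
  have hD : ∀ i < κ.ord, IsClubIn (D i) κ.ord := fun i hi => isClubIn_clubChain hκ hω he hi
  obtain ⟨B, hB, hXB⟩ := exists_isClubIn_disjoint_of_not_isStatIn
    (fun δ hδ => hS.1 hδ.1) (hamen _ (hD _ hΛ))
  obtain ⟨δ, hδS, hδB⟩ := hS.2 B hB
  have hδ : sSup ((D (ω₁ + ω) ∩ Iio δ) \ C δ) = δ :=
    (csSup_le' fun x hx => hx.1.2.le).antisymm
      (not_lt.1 fun hlt => hXB.notMem_of_mem_left ⟨hδS, hlt⟩ hδB)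
  obtain ⟨i, hi, hiδ⟩ := exists_lt_sSup_nacc_PhiD_inter_eq (hC δ hδS) (E := fun i => e (D i))
    clubChain_antitone (fun i => clubChain_subset (lt_add_one i))
    (fun i hi η hη => (hD i (hi.trans hΛ)).sSup_inter_Iio_mem_s7 (hη.trans (hS.1 hδS))) hδ
  exact hne _ (hD i (hi.trans hΛ)) δ hδS hiδ
end
end
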